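/- arXiv:2406.02967 — 2 statements merged into one kernel-verified Lean document; each statement's English description precedes it below -/
import Mathlib

section
/- Let (A, B, H) be a finite-dimensional irreducible P-module that is not diffuse, i.e., there exists a nonzero vector not annihilated by all rays. Then there is d ≤ dim(H), a prime word w of length d, and φ ∈ S¹ such that (A, B, H) is unitarily equivalent to m_{w,φ} = (A_w D_φ, B_w D_φ, ℂ^d); in particular d = dim(H). -/
open Filter Topology
open scoped InnerProductSpace

/-- Action of a finite binary word on a vector: digit `false` acts by `A`,
digit `true` by `B`, with the first digit acting first. -/
noncomputable def wordAct {H : Type*} [NormedAddCommGroup H] [InnerProductSpace ℂ H]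
    (A B : H →L[ℂ] H) : List Bool → H → H
  | [], ξ => ξ
  | b :: rest, ξ => wordAct A B rest ((if b then B else A) ξ)

/-- The length-`n` prefix of a ray `p : ℕ → Bool` as a list. -/
def pre (p : ℕ → Bool) (n : ℕ) : List Bool := List.ofFn fun i : Fin n => p i

/-- The Pythagorean equality `A*A + B*B = id`. -/
def IsPyth {H : Type*} [NormedAddCommGroup H] [InnerProductSpace ℂ H] [CompleteSpace H]
    (A B : H →L[ℂ] H) : Prop :=
  (ContinuousLinearMap.adjoint A).comp A + (ContinuousLinearMap.adjoint B).comp B =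
    ContinuousLinearMap.id ℂ H

/-- `ξ` is a nonzero vector contained in the ray `p`. -/
noncomputable def ContainedIn {H : Type*} [NormedAddCommGroup H] [InnerProductSpace ℂ H]
    (A B : H →L[ℂ] H) (p : ℕ → Bool) (ξ : H) : Prop :=
  ξ ≠ 0 ∧ ∀ n : ℕ, ‖wordAct A B (pre p n) ξ‖ = ‖ξ‖
/-- The partial shift matrix `A_w`: `A_w e_n = e_{n+1 mod d}` if the `n`-th digit of
`w` is `0` (i.e. `false`), else `A_w e_n = 0`. -/
def Aw (d : ℕ) (w : Fin d → Bool) : Matrix (Fin d) (Fin d) ℂ :=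
  fun i j => if w j = false ∧ (i : ℕ) = ((j : ℕ) + 1) % d then 1 else 0

/-- The partial shift matrix `B_w`: `B_w e_n = e_{n+1 mod d}` if the `n`-th digit of
`w` is `1` (i.e. `true`), else `B_w e_n = 0`. -/
def Bw (d : ℕ) (w : Fin d → Bool) : Matrix (Fin d) (Fin d) ℂ :=
  fun i j => if w j = true ∧ (i : ℕ) = ((j : ℕ) + 1) % d then 1 else 0

/-- The diagonal matrix `diag(1, …, 1, φ)`. -/
def Dmat (d : ℕ) (φ : ℂ) : Matrix (Fin d) (Fin d) ℂ :=
  Matrix.diagonal fun i => if (i : ℕ) = d - 1 then φ else 1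

/-- A binary word `w` of length `d` is prime iff it is not a proper power, i.e. it is
not invariant under the cyclic shift by `k` for any proper divisor `k` of `d`. -/
def IsPrimeWord (d : ℕ) (w : Fin d → Bool) : Prop :=
  ∀ k : ℕ, 0 < k → k < d → k ∣ d →
    ¬ ∀ i : Fin d, w ⟨((i : ℕ) + k) % d, Nat.mod_lt _ i.pos⟩ = w i

/-- The periodic ray `w^∞` obtained by repeating the word `w` of length `d`. -/
def rayOfWord (d : ℕ) (hd : 0 < d) (w : Fin d → Bool) : ℕ → Bool :=
  fun n => w ⟨n % d, Nat.mod_lt _ hd⟩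

/-- Action of a finite binary word on `ℂ^d` via the matrices `A` (digit `false`) and
`B` (digit `true`), the first digit acting first. -/
noncomputable def matAct {d : ℕ} (A B : Matrix (Fin d) (Fin d) ℂ) :
    List Bool → EuclideanSpace ℂ (Fin d) → EuclideanSpace ℂ (Fin d)
  | [], ξ => ξ
  | b :: rest, ξ => matAct A B rest (Matrix.toEuclideanLin (if b then B else A) ξ)

/-!
Along any ray the norms `‖qₙ ξ‖` decrease, because `A*A + B*B = 1`. If they do not tend to `0`,
compactness of a closed ball and of `{0,1}^ℕ` yields a nonzero `η` and a ray `p` along which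
no norm is lost at all: at every step the letter not taken kills the current vector, so such
vectors form a subspace. Vectors contained in rays that differ somewhere are orthogonal, hence in
finite dimension two shifts of `p` coincide, and we may take `p` periodic of minimal period `d`.
The word of one period acts isometrically on the subspace of vectors contained in `p`; a unit
eigenvector `v` (eigenvalue `φ`, `|φ| = 1`) has the orthonormal orbit `v, p₁ v, …, p_{d-1} v`,
on which `A` and `B` act as on the standard basis of `m_{w,φ}`. Its span is invariant, hence
all of `H`.
-/

theorem Submodule.exists_norm_eq_one_eigenvector {E : Type*} [NormedAddCommGroup E]
    [NormedSpace ℂ E] [FiniteDimensional ℂ E] (T : E →ₗ[ℂ] E) {S : Submodule ℂ E} (hS : S ≠ ⊥)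
    (hTS : ∀ x ∈ S, T x ∈ S) : ∃ v ∈ S, ‖v‖ = 1 ∧ ∃ μ : ℂ, T v = μ • v := by
  have : Nontrivial S := Submodule.nontrivial_iff_ne_bot.2 hS
  obtain ⟨μ, hμ⟩ := Module.End.exists_eigenvalue (T.restrict hTS)
  obtain ⟨w, hw⟩ := hμ.exists_hasEigenvector
  have hw0 : (w : E) ≠ 0 := by simpa using hw.2
  have hTw : T w = μ • (w : E) := by simpa using congr_arg Subtype.val hw.apply_eq_smul
  refine ⟨(‖(w : E)‖⁻¹ : ℂ) • (w : E), S.smul_mem _ w.2, norm_smul_inv_norm hw0, μ, ?_⟩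
  rw [map_smul, hTw, smul_comm]

theorem OrthonormalBasis.repr_apply_eq_toEuclideanLin {ι 𝕜 E : Type*} [Fintype ι] [DecidableEq ι]
    [RCLike 𝕜] [NormedAddCommGroup E] [InnerProductSpace 𝕜 E] (b : OrthonormalBasis ι 𝕜 E)
    {T : E →ₗ[𝕜] E} {G : Matrix ι ι 𝕜} (hG : ∀ i j, ⟪b i, T (b j)⟫_𝕜 = G i j) (ξ : E) :
    b.repr (T ξ) = Matrix.toEuclideanLin G (b.repr ξ) := by
  have : b.repr.toLinearMap ∘ₗ T = Matrix.toEuclideanLin G ∘ₗ b.repr.toLinearMap := by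
    refine b.toBasis.ext fun j => ?_
    ext i
    simp [hG, b.repr_apply_apply]
  exact LinearMap.congr_fun this ξ

open Function

section

variable {H : Type*} [NormedAddCommGroup H] [InnerProductSpace ℂ H]

def step (A B : H →L[ℂ] H) (b : Bool) : H →L[ℂ] H := if b then B else A

noncomputable def wordCLM (A B : H →L[ℂ] H) : List Bool → H →L[ℂ] H
  | [] => ContinuousLinearMap.id ℂ H
  | b :: w => (wordCLM A B w).comp (step A B b)

def shiftRay (p : ℕ → Bool) : ℕ → Bool := fun i => p (i + 1)

section Words

variable (A B : H →L[ℂ] H)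

theorem coe_wordCLM : ∀ w : List Bool, ⇑(wordCLM A B w) = wordAct A B w
  | [] => rfl
  | b :: w => by ext ξ; simp [wordCLM, wordAct, step, coe_wordCLM w]

theorem wordAct_append : ∀ (w w' : List Bool) (ξ : H),
    wordAct A B (w ++ w') ξ = wordAct A B w' (wordAct A B w ξ)
  | [], _, _ => rfl
  | _ :: w, w', _ => wordAct_append w w' _

theorem shiftRay_iterate_apply (p : ℕ → Bool) (n i : ℕ) : shiftRay^[n] p i = p (i + n) := by
  induction n generalizing p with
  | zero => rfl
  | succ n ih => rw [iterate_succ_apply, ih]; simp [shiftRay, Nat.add_assoc]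

theorem pre_add (p : ℕ → Bool) (n m : ℕ) : pre p (n + m) = pre p n ++ pre (shiftRay^[n] p) m := by
  simp [pre, List.ofFn_add, shiftRay_iterate_apply, Nat.add_comm]

theorem wordAct_pre_add (p : ℕ → Bool) (n m : ℕ) (ξ : H) :
    wordAct A B (pre p (n + m)) ξ =
      wordAct A B (pre (shiftRay^[n] p) m) (wordAct A B (pre p n) ξ) := by
  rw [pre_add, wordAct_append]

theorem wordAct_pre_succ (p : ℕ → Bool) (n : ℕ) (ξ : H) :
    wordAct A B (pre p (n + 1)) ξ = step A B (p n) (wordAct A B (pre p n) ξ) := by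
  rw [wordAct_pre_add]
  simp [pre, wordAct, step, shiftRay_iterate_apply]

end Words

-- The vectors contained in the ray `p`, together with `0` (see `IsPyth.containedIn_iff`).
noncomputable def raySubspace (A B : H →L[ℂ] H) (p : ℕ → Bool) : Submodule ℂ H :=
  ⨅ n, LinearMap.ker ((step A B (!p n)).comp (wordCLM A B (pre p n)) : H →ₗ[ℂ] H)

section RaySubspace

variable {A B : H →L[ℂ] H} {p : ℕ → Bool} {x : H}

theorem mem_raySubspace :
    x ∈ raySubspace A B p ↔ ∀ n, step A B (!p n) (wordAct A B (pre p n) x) = 0 := by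
  simp [raySubspace, Submodule.mem_iInf, coe_wordCLM]

theorem step_not_head_eq_zero (hx : x ∈ raySubspace A B p) : step A B (!p 0) x = 0 :=
  mem_raySubspace.1 hx 0

theorem wordAct_mem_raySubspace (hx : x ∈ raySubspace A B p) (n : ℕ) :
    wordAct A B (pre p n) x ∈ raySubspace A B (shiftRay^[n] p) := by
  refine mem_raySubspace.2 fun m => ?_
  rw [← wordAct_pre_add, shiftRay_iterate_apply, Nat.add_comm]
  exact mem_raySubspace.1 hx (n + m)

theorem step_head_mem_raySubspace (hx : x ∈ raySubspace A B p) :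
    step A B (p 0) x ∈ raySubspace A B (shiftRay p) := by
  simpa [pre, wordAct, step] using wordAct_mem_raySubspace hx 1

end RaySubspace

namespace IsPyth

variable [CompleteSpace H] {A B : H →L[ℂ] H}

theorem inner_step_add (hAB : IsPyth A B) (b : Bool) (x y : H) :
    ⟪step A B b x, step A B b y⟫_ℂ + ⟪step A B (!b) x, step A B (!b) y⟫_ℂ = ⟪x, y⟫_ℂ := by
  have hy : A.adjoint (A y) + B.adjoint (B y) = y := by
    simpa using congr($hAB y)
  have hAB' : ⟪A x, A y⟫_ℂ + ⟪B x, B y⟫_ℂ = ⟪x, y⟫_ℂ := by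
    rw [← ContinuousLinearMap.adjoint_inner_right, ← ContinuousLinearMap.adjoint_inner_right,
      ← inner_add_right, hy]
  cases b
  · simpa [step] using hAB'
  · simpa [step, add_comm] using hAB'

theorem norm_step_sq_add (hAB : IsPyth A B) (b : Bool) (x : H) :
    ‖step A B b x‖ ^ 2 + ‖step A B (!b) x‖ ^ 2 = ‖x‖ ^ 2 := by
  have := hAB.inner_step_add b x x
  rw [inner_self_eq_norm_sq_to_K, inner_self_eq_norm_sq_to_K, inner_self_eq_norm_sq_to_K] at this
  exact_mod_cast this

theorem norm_step_le (hAB : IsPyth A B) (b : Bool) (x : H) : ‖step A B b x‖ ≤ ‖x‖ := by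
  have := hAB.norm_step_sq_add b x
  exact (sq_le_sq₀ (norm_nonneg _) (norm_nonneg _)).1 (by nlinarith [sq_nonneg ‖step A B (!b) x‖])

theorem norm_step_eq_iff (hAB : IsPyth A B) (b : Bool) (x : H) :
    ‖step A B b x‖ = ‖x‖ ↔ step A B (!b) x = 0 := by
  have := hAB.norm_step_sq_add b x
  rw [← norm_eq_zero, ← sq_eq_zero_iff,
    ← pow_left_inj₀ (norm_nonneg _) (norm_nonneg x) two_ne_zero]
  constructor <;> intro h <;> linarith

theorem mem_raySubspace_iff (hAB : IsPyth A B) {p : ℕ → Bool} {x : H} :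
    x ∈ raySubspace A B p ↔ ∀ n, ‖wordAct A B (pre p n) x‖ = ‖x‖ := by
  simp only [mem_raySubspace, ← hAB.norm_step_eq_iff, ← wordAct_pre_succ]
  constructor
  · intro h n
    induction n with
    | zero => rfl
    | succ n ih => rw [h, ih]
  · intro h n
    rw [h, h]

theorem containedIn_iff (hAB : IsPyth A B) {p : ℕ → Bool} {x : H} :
    ContainedIn A B p x ↔ x ≠ 0 ∧ x ∈ raySubspace A B p := by
  rw [hAB.mem_raySubspace_iff, ContainedIn]

theorem containedIn_wordAct (hAB : IsPyth A B) {p : ℕ → Bool} {x : H} (hx : ContainedIn A B p x)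
    (n : ℕ) : ContainedIn A B (shiftRay^[n] p) (wordAct A B (pre p n) x) := by
  rw [hAB.containedIn_iff] at hx ⊢
  refine ⟨?_, wordAct_mem_raySubspace hx.2 n⟩
  rw [← norm_ne_zero_iff, hAB.mem_raySubspace_iff.1 hx.2, norm_ne_zero_iff]
  exact hx.1

theorem inner_eq_zero_of_head_ne (hAB : IsPyth A B) {p p' : ℕ → Bool} {x y : H}
    (hx : x ∈ raySubspace A B p) (hy : y ∈ raySubspace A B p') (h : p 0 ≠ p' 0) :
    ⟪x, y⟫_ℂ = 0 := by
  have hy' : step A B (p 0) y = 0 := by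
    simpa [Bool.eq_not.2 h] using step_not_head_eq_zero hy
  rw [← hAB.inner_step_add (p 0), step_not_head_eq_zero hx, hy', inner_zero_left,
    inner_zero_right, add_zero]

theorem inner_eq_zero_of_mem_raySubspace (hAB : IsPyth A B) {p p' : ℕ → Bool} {x y : H}
    (hx : x ∈ raySubspace A B p) (hy : y ∈ raySubspace A B p') {j : ℕ} (h : p j ≠ p' j) :
    ⟪x, y⟫_ℂ = 0 := by
  induction j generalizing p p' x y with
  | zero => exact hAB.inner_eq_zero_of_head_ne hx hy h
  | succ j ih =>
    by_cases h0 : p 0 = p' 0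
    · rw [← hAB.inner_step_add (p 0), step_not_head_eq_zero hx, inner_zero_left, add_zero]
      exact ih (step_head_mem_raySubspace hx) (h0 ▸ step_head_mem_raySubspace hy)
        (by simpa [shiftRay] using h)
    · exact hAB.inner_eq_zero_of_head_ne hx hy h0

end IsPyth

namespace IsPyth

variable [FiniteDimensional ℂ H] {A B : H →L[ℂ] H}

theorem exists_containedIn_of_not_tendsto (hAB : IsPyth A B) {ξ : H} {q : ℕ → Bool}
    (hq : ¬ Tendsto (fun n => ‖wordAct A B (pre q n) ξ‖) atTop (𝓝 0)) :
    ∃ p η, ContainedIn A B p η := by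
  set a : ℕ → ℝ := fun n => ‖wordAct A B (pre q n) ξ‖
  have ha : Antitone a := antitone_nat_of_succ_le fun n => by
    simpa only [a, wordAct_pre_succ] using hAB.norm_step_le _ _
  have hc : Tendsto a atTop (𝓝 (⨅ n, a n)) :=
    tendsto_atTop_ciInf ha ⟨0, by rintro _ ⟨n, rfl⟩; positivity⟩
  have hK : IsCompact (Metric.closedBall (0 : H) ‖ξ‖ ×ˢ (Set.univ : Set (ℕ → Bool))) :=
    (isCompact_closedBall _ _).prod isCompact_univ
  obtain ⟨⟨η, p⟩, -, φ, hφ, hlim⟩ := hK.tendsto_subseq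
    (x := fun n => (wordAct A B (pre q n) ξ, shiftRay^[n] q))
    fun n => ⟨mem_closedBall_zero_iff.2 (by simpa [a, pre, wordAct] using ha n.zero_le), trivial⟩
  have hnorm : ∀ m, ‖wordAct A B (pre p m) η‖ = ⨅ n, a n := by
    intro m
    have hpre : ∀ᶠ k in atTop, pre (shiftRay^[φ k] q) m = pre p m := by
      have hcoord (i : ℕ) : ∀ᶠ k in atTop, shiftRay^[φ k] q i = p i := by
        have := tendsto_pi_nhds.1 (hlim.snd_nhds) i
        rwa [nhds_discrete, tendsto_pure] at this
      filter_upwards [eventually_all.2 fun i : Fin m => hcoord i] with k hk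
      simp only [pre, hk]
    refine tendsto_nhds_unique (((coe_wordCLM A B (pre p m) ▸
      (wordCLM A B (pre p m)).continuous).tendsto η).norm.comp hlim.fst_nhds) ?_
    refine (hc.comp (tendsto_atTop_mono (fun k => Nat.le_add_right _ m)
      hφ.tendsto_atTop)).congr' ?_
    filter_upwards [hpre] with k hk
    simp [a, wordAct_pre_add, hk]
  have hη : ‖η‖ = ⨅ n, a n := by simpa [pre, wordAct] using hnorm 0
  refine ⟨p, η, fun h0 => hq ?_, fun m => (hnorm m).trans hη.symm⟩
  rwa [← hη, h0, norm_zero] at hc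

theorem exists_containedIn_mem_periodicPts (hAB : IsPyth A B) {p : ℕ → Bool} {η : H}
    (h : ContainedIn A B p η) : ∃ p' η', ContainedIn A B p' η' ∧ p' ∈ periodicPts shiftRay := by
  have hη := hAB.containedIn_iff.1 h
  have hinj : ¬ Injective fun n => shiftRay^[n] p := by
    intro hinj
    refine Module.Finite.not_linearIndependent_of_infinite (R := ℂ)
      (fun n => wordAct A B (pre p n) η) ?_
    refine linearIndependent_of_ne_zero_of_inner_eq_zero
      (fun n => (hAB.containedIn_wordAct h n).1) fun n m hnm => ?_
    obtain ⟨j, hj⟩ := Function.ne_iff.1 (hinj.ne hnm)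
    exact hAB.inner_eq_zero_of_mem_raySubspace (wordAct_mem_raySubspace hη.2 n)
      (wordAct_mem_raySubspace hη.2 m) hj
  obtain ⟨n, m, hnm, hne⟩ := Function.not_injective_iff.1 hinj
  wlog hlt : n < m generalizing n m
  · exact this m n hnm.symm hne.symm (lt_of_le_of_ne (not_lt.1 hlt) hne.symm)
  refine ⟨_, _, hAB.containedIn_wordAct h n, m - n, Nat.sub_pos_of_lt hlt, ?_⟩
  rw [IsPeriodicPt, IsFixedPt, ← iterate_add_apply, Nat.sub_add_cancel hlt.le]
  exact hnm.symm

end IsPyth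

theorem isPrimeWord_minimalPeriod (p : ℕ → Bool) :
    IsPrimeWord (minimalPeriod shiftRay p) fun j => p j := by
  set e := minimalPeriod shiftRay p
  have hmod (n : ℕ) : p (n % e) = p n := by
    simpa [shiftRay_iterate_apply] using
      congr_fun (iterate_mod_minimalPeriod_eq (f := shiftRay) (x := p) (n := n)) 0
  intro k hk hke _ hw
  refine absurd (IsPeriodicPt.minimalPeriod_le hk (funext fun n => ?_)) (not_le.2 hke)
  calc shiftRay^[k] p n = p ((n % e + k) % e) := by
        rw [shiftRay_iterate_apply, Nat.mod_add_mod, hmod]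
    _ = p n := (hw ⟨n % e, Nat.mod_lt _ (by omega)⟩).trans (hmod n)

section Orbit

variable {A B : H →L[ℂ] H}

theorem step_wordAct_pre {p : ℕ → Bool} {e : ℕ} {v : H} {μ : ℂ} (hv : v ∈ raySubspace A B p)
    (hμ : wordAct A B (pre p e) v = μ • v) (b : Bool) (j : Fin e) :
    step A B b (wordAct A B (pre p j) v) = if p j = b then
      (if (j : ℕ) = e - 1 then μ else 1) • wordAct A B (pre p ((j + 1) % e)) v else 0 := by
  split_ifs with hb hj
  · rw [← hb, ← wordAct_pre_succ, show (j : ℕ) + 1 = e by omega, Nat.mod_self, hμ]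
    rfl
  · rw [← hb, ← wordAct_pre_succ, Nat.mod_eq_of_lt (by omega), one_smul]
  · rw [Bool.eq_not.2 (Ne.symm hb)]
    exact mem_raySubspace.1 hv j

theorem IsPyth.orthonormal_orbit [CompleteSpace H] (hAB : IsPyth A B) {p : ℕ → Bool} {v : H}
    (hv : v ∈ raySubspace A B p) (hv1 : ‖v‖ = 1) :
    Orthonormal ℂ fun j : Fin (minimalPeriod shiftRay p) => wordAct A B (pre p j) v := by
  refine ⟨fun j => (hAB.mem_raySubspace_iff.1 hv j).trans hv1, fun i j hij => ?_⟩
  have : shiftRay^[i] p ≠ shiftRay^[j] p := fun h =>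
    hij (Fin.ext (iterate_injOn_Iio_minimalPeriod i.2 j.2 h))
  obtain ⟨k, hk⟩ := Function.ne_iff.1 this
  exact hAB.inner_eq_zero_of_mem_raySubspace (wordAct_mem_raySubspace hv i)
    (wordAct_mem_raySubspace hv j) hk

theorem inner_step_orbit {d : ℕ} (hd : 0 < d) {w : Fin d → Bool} {φ : ℂ} {u : Fin d → H}
    (hu : Orthonormal ℂ u) (hstep : ∀ b j, step A B b (u j) = if w j = b then
      (if (j : ℕ) = d - 1 then φ else 1) • u ⟨(j + 1) % d, Nat.mod_lt _ hd⟩ else 0)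
    (b : Bool) (i j : Fin d) :
    ⟪u i, step A B b (u j)⟫_ℂ = ((if b then Bw d w else Aw d w) * Dmat d φ) i j := by
  have hM : (if b then Bw d w else Aw d w) i j =
      if w j = b ∧ (i : ℕ) = ((j : ℕ) + 1) % d then 1 else 0 := by
    cases b <;> rfl
  rw [hstep, Dmat, Matrix.mul_diagonal, hM, apply_ite (inner ℂ (u i)), inner_smul_right,
    inner_zero_right, orthonormal_iff_ite.1 hu]
  by_cases hwb : w j = b <;> by_cases hi : (i : ℕ) = ((j : ℕ) + 1) % d <;>
    simp [hwb, hi, Fin.ext_iff]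

theorem exists_linearIsometryEquiv_of_orbit
    (hirr : ∀ S : Submodule ℂ H, (∀ x ∈ S, A x ∈ S ∧ B x ∈ S) → S = ⊥ ∨ S = ⊤)
    {d : ℕ} (hd : 0 < d) {w : Fin d → Bool} {φ : ℂ} {u : Fin d → H}
    (hu : Orthonormal ℂ u) (hstep : ∀ b j, step A B b (u j) = if w j = b then
      (if (j : ℕ) = d - 1 then φ else 1) • u ⟨(j + 1) % d, Nat.mod_lt _ hd⟩ else 0) :
    d = Module.finrank ℂ H ∧ ∃ U : H ≃ₗᵢ[ℂ] EuclideanSpace ℂ (Fin d),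
      (∀ ξ : H, U (A ξ) = Matrix.toEuclideanLin (Aw d w * Dmat d φ) (U ξ)) ∧
      (∀ ξ : H, U (B ξ) = Matrix.toEuclideanLin (Bw d w * Dmat d φ) (U ξ)) := by
  set N := Submodule.span ℂ (Set.range u)
  have hmaps (b : Bool) : N ≤ N.comap (step A B b : H →ₗ[ℂ] H) := by
    refine Submodule.span_le.2 ?_
    rintro _ ⟨j, rfl⟩
    simp only [SetLike.mem_coe, Submodule.mem_comap, ContinuousLinearMap.coe_coe, hstep]
    by_cases hwb : w j = b
    · rw [if_pos hwb]
      exact N.smul_mem _ (Submodule.subset_span ⟨_, rfl⟩)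
    · rw [if_neg hwb]
      exact N.zero_mem
  have hN : N = ⊤ := by
    refine (hirr N fun x hx => ⟨hmaps false hx, hmaps true hx⟩).resolve_left fun h => ?_
    exact hu.ne_zero ⟨0, hd⟩ ((Submodule.span_eq_bot.1 h) _ ⟨_, rfl⟩)
  set b := OrthonormalBasis.mk hu hN.ge
  have hb : ⇑b = u := OrthonormalBasis.coe_mk hu hN.ge
  refine ⟨by simpa using (Module.finrank_eq_card_basis b.toBasis).symm, b.repr,
    b.repr_apply_eq_toEuclideanLin (T := (step A B false : H →ₗ[ℂ] H)) ?_,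
    b.repr_apply_eq_toEuclideanLin (T := (step A B true : H →ₗ[ℂ] H)) ?_⟩ <;>
  rw [hb] <;>
  exact inner_step_orbit hd hu hstep _

end Orbit

end

theorem stmt15 {H : Type*} [NormedAddCommGroup H] [InnerProductSpace ℂ H]
    [FiniteDimensional ℂ H] (A B : H →L[ℂ] H) (hAB : IsPyth A B)
    (hirr : ∀ S : Submodule ℂ H, (∀ x ∈ S, A x ∈ S ∧ B x ∈ S) → S = ⊥ ∨ S = ⊤)
    (hnotdiff : ∃ (ξ : H) (q : ℕ → Bool), ξ ≠ 0 ∧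
      ¬ Tendsto (fun n : ℕ => ‖wordAct A B (pre q n) ξ‖) atTop (𝓝 0)) :
    ∃ (d : ℕ) (hd : 0 < d) (w : Fin d → Bool) (φ : ℂ),
      IsPrimeWord d w ∧ ‖φ‖ = 1 ∧ d = Module.finrank ℂ H ∧
      ∃ U : H ≃ₗᵢ[ℂ] EuclideanSpace ℂ (Fin d),
        (∀ ξ : H, U (A ξ) = Matrix.toEuclideanLin (Aw d w * Dmat d φ) (U ξ)) ∧
        (∀ ξ : H, U (B ξ) = Matrix.toEuclideanLin (Bw d w * Dmat d φ) (U ξ)) := by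
  obtain ⟨ξ, q, -, hq⟩ := hnotdiff
  obtain ⟨p₀, η₀, h₀⟩ := hAB.exists_containedIn_of_not_tendsto hq
  obtain ⟨p, η, hη, hp⟩ := hAB.exists_containedIn_mem_periodicPts h₀
  rw [hAB.containedIn_iff] at hη
  set e := minimalPeriod shiftRay p
  have he : 0 < e := minimalPeriod_pos_of_mem_periodicPts hp
  have hinv : ∀ x ∈ raySubspace A B p, wordCLM A B (pre p e) x ∈ raySubspace A B p := by
    intro x hx
    simpa [coe_wordCLM, e, iterate_minimalPeriod] using wordAct_mem_raySubspace hx e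
  obtain ⟨v, hv, hv1, μ, hμ⟩ := Submodule.exists_norm_eq_one_eigenvector
    (wordCLM A B (pre p e) : H →ₗ[ℂ] H) ((Submodule.ne_bot_iff _).2 ⟨η, hη.2, hη.1⟩) hinv
  rw [ContinuousLinearMap.coe_coe, coe_wordCLM] at hμ
  have hμ1 : ‖μ‖ = 1 := by
    simpa [hμ, norm_smul, hv1] using hAB.mem_raySubspace_iff.1 hv e
  obtain ⟨hdim, U, hUA, hUB⟩ := exists_linearIsometryEquiv_of_orbit hirr he
    (hAB.orthonormal_orbit hv hv1) (step_wordAct_pre hv hμ)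
  exact ⟨e, he, _, μ, isPrimeWord_minimalPeriod p, hμ1, hdim, U, hUA, hUB⟩
end

section
/- Let (A, B, H) be a finite-dimensional P-module, and for a periodic ray p let H^{[p]} denote the span of all vectors ξ ∈ H such that ξ is contained in ₖp for some k ≥ 0 (where ₖp is p with its first k digits removed). If p and q are periodic rays that are not equal modulo finite prefixes (i.e., there are no k, n with ₖp = ₙq), then H^{[p]} and H^{[q]} are orthogonal subspaces. -/
open Filter Topology
open scoped InnerProductSpace

section Aux

variable {H : Type*} [NormedAddCommGroup H] [InnerProductSpace ℂ H]
  [FiniteDimensional ℂ H] {A B : H →L[ℂ] H}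

theorem pyth_inner (hAB : IsPyth A B) (ξ η : H) :
    ⟪ξ, η⟫_ℂ = ⟪A ξ, A η⟫_ℂ + ⟪B ξ, B η⟫_ℂ := by
  have h := congrArg (fun T : H →L[ℂ] H => ⟪ξ, T η⟫_ℂ) hAB
  simpa only [ContinuousLinearMap.add_apply, ContinuousLinearMap.comp_apply,
    ContinuousLinearMap.id_apply, inner_add_right,
    ContinuousLinearMap.adjoint_inner_right, eq_comm] using h

theorem pyth_norm (hAB : IsPyth A B) (ξ : H) :
    ‖A ξ‖ ^ 2 + ‖B ξ‖ ^ 2 = ‖ξ‖ ^ 2 := by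
  have h := pyth_inner hAB ξ ξ
  rw [inner_self_eq_norm_sq_to_K (𝕜 := ℂ), inner_self_eq_norm_sq_to_K (𝕜 := ℂ),
    inner_self_eq_norm_sq_to_K (𝕜 := ℂ)] at h
  exact_mod_cast h.symm

theorem pre_succ (p : ℕ → Bool) (n : ℕ) :
    pre p (n + 1) = p 0 :: pre (fun m => p (m + 1)) n := by
  simp [pre, List.ofFn_succ]

/-- One-step peeling: the current letter preserves norm and the other letter
kills the vector, and the image is contained in the shifted ray. -/
theorem ContainedIn.step (hAB : IsPyth A B) {p : ℕ → Bool} {ξ : H}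
    (h : ContainedIn A B p ξ) :
    ContainedIn A B (fun m => p (m + 1)) ((if p 0 then B else A) ξ) ∧
      (if p 0 then A else B) ξ = 0 := by
  obtain ⟨hne, hnorm⟩ := h
  have key : ∀ n, ‖wordAct A B (pre (fun m => p (m + 1)) n)
      ((if p 0 then B else A) ξ)‖ = ‖ξ‖ := by
    intro n
    have := hnorm (n + 1)
    rwa [pre_succ, wordAct] at this
  have hξ'norm : ‖(if p 0 then B else A) ξ‖ = ‖ξ‖ := by simpa [wordAct, pre] using key 0
  have hp2 := pyth_norm hAB ξ
  have hother : (if p 0 then A else B) ξ = 0 := by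
    have h2 : ‖(if p 0 then A else B) ξ‖ ^ 2 = 0 := by
      cases hc : p 0
      · simp only [hc, Bool.false_eq_true, if_false] at hξ'norm ⊢
        rw [← hξ'norm] at hp2
        linarith
      · simp only [hc, if_true] at hξ'norm ⊢
        rw [← hξ'norm] at hp2
        linarith
    simpa [pow_eq_zero_iff] using h2
  refine ⟨⟨?_, fun n => by rw [key n, hξ'norm]⟩, hother⟩
  intro h0
  apply hne
  rw [← norm_eq_zero, ← hξ'norm, h0, norm_zero]

/-- Vectors contained in rays that first differ at position `m` are orthogonal. -/
theorem orth_of_differ (hAB : IsPyth A B) :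
    ∀ (m : ℕ) (p q : ℕ → Bool) (ξ η : H), ContainedIn A B p ξ → ContainedIn A B q η →
      (∀ i < m, p i = q i) → p m ≠ q m → ⟪ξ, η⟫_ℂ = 0 := by
  intro m
  induction m with
  | zero =>
    intro p q ξ η hξ hη _ hne
    obtain ⟨_, hξ0⟩ := hξ.step hAB
    obtain ⟨_, hη0⟩ := hη.step hAB
    rw [pyth_inner hAB ξ η]
    cases hcp : p 0 <;> cases hcq : q 0 <;>
        simp only [hcp] at hξ0 <;> simp only [hcq] at hη0 <;>
        simp only [if_true, Bool.false_eq_true, if_false] at hξ0 hη0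
    · exact absurd (hcp.trans hcq.symm) hne
    · rw [hη0, hξ0]; simp
    · rw [hξ0, hη0]; simp
    · exact absurd (hcp.trans hcq.symm) hne
  | succ m ih =>
    intro p q ξ η hξ hη hagree hne
    have h0 : p 0 = q 0 := hagree 0 (Nat.succ_pos m)
    obtain ⟨hξ', hξ0⟩ := hξ.step hAB
    obtain ⟨hη', hη0⟩ := hη.step hAB
    have hrec := ih _ _ _ _ hξ' hη'
      (fun i hi => hagree (i + 1) (Nat.succ_lt_succ hi)) hne
    rw [pyth_inner hAB ξ η]
    rw [← h0] at hrec
    cases hc : p 0 <;> simp only [hc] at hξ0 hrec <;>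
        simp only [if_true, Bool.false_eq_true, if_false] at hξ0 hrec <;>
        simp [hξ0, hrec]

end Aux

theorem stmt18 {H : Type*} [NormedAddCommGroup H] [InnerProductSpace ℂ H]
    [FiniteDimensional ℂ H] (A B : H →L[ℂ] H) (hAB : IsPyth A B)
    (p q : ℕ → Bool)
    (hp : ∃ d : ℕ, 0 < d ∧ ∀ n : ℕ, p (n + d) = p n)
    (hq : ∃ d : ℕ, 0 < d ∧ ∀ n : ℕ, q (n + d) = q n)
    (hpq : ¬ ∃ k n : ℕ, (fun m : ℕ => p (m + k)) = (fun m : ℕ => q (m + n))) :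
    ∀ x ∈ Submodule.span ℂ
        {ξ : H | ∃ k : ℕ, ContainedIn A B (fun n => p (n + k)) ξ},
      ∀ y ∈ Submodule.span ℂ
        {ξ : H | ∃ k : ℕ, ContainedIn A B (fun n => q (n + k)) ξ},
      ⟪x, y⟫_ℂ = 0 := by
  have key : ∀ ξ ∈ {ξ : H | ∃ k : ℕ, ContainedIn A B (fun n => p (n + k)) ξ},
      ∀ η ∈ {ξ : H | ∃ k : ℕ, ContainedIn A B (fun n => q (n + k)) ξ},
      ⟪ξ, η⟫_ℂ = 0 := by
    rintro ξ ⟨k, hξ⟩ η ⟨n, hη⟩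
    have hneq : (fun m : ℕ => p (m + k)) ≠ (fun m : ℕ => q (m + n)) :=
      fun h => hpq ⟨k, n, h⟩
    have : ∃ m, p (m + k) ≠ q (m + n) := by
      by_contra h
      push_neg at h
      exact hneq (funext h)
    set m := Nat.find this with hmdef
    have hm : p (m + k) ≠ q (m + n) := Nat.find_spec this
    have hmin : ∀ i < m, p (i + k) = q (i + n) := fun i hi => by
      have := Nat.find_min this hi; simpa using this
    exact orth_of_differ hAB m _ _ ξ η hξ hη hmin hm
  have horth : Submodule.span ℂ {ξ : H | ∃ k : ℕ, ContainedIn A B (fun n => p (n + k)) ξ} ⟂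
      Submodule.span ℂ {ξ : H | ∃ k : ℕ, ContainedIn A B (fun n => q (n + k)) ξ} :=
    Submodule.isOrtho_span.2 key
  intro x hx y hy
  exact (Submodule.mem_orthogonal' _ _).1 (horth hx) y hy
end
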